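/- For every k ≥ n, writing k = pn + q with p ≥ 1 and 0 ≤ q ≤ n−1, the optimal revisit time satisfies R*(k) = R*(n + ⌈q/p⌉). In particular, the values R*(n), R*(n+1), ..., R*(2n−1) determine R*(k) for all k ≥ n. -/

import Mathlib

/-- A closed walk with `k` visits on `n` targets, modeled as a `k`-periodic
sequence of targets in which consecutive visits are distinct and every
target is visited at least once in each period. -/
structure CWalk (n k : ℕ) where
  seq : ℕ → Fin n
  periodic : ∀ i, seq (i + k) = seq i
  step : ∀ i, seq i ≠ seq (i + 1)
  covers : ∀ d : Fin n, ∃ i < k, seq i = d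

namespace CWalk

/-- Travel time from the `i`-th to the `j`-th visit. -/
noncomputable def tt {n k : ℕ} (c : Fin n → Fin n → ℝ) (W : CWalk n k) (i j : ℕ) : ℝ :=
  ∑ t ∈ Finset.Ico i j, c (W.seq t) (W.seq (t + 1))

/-- Duration of one period of the walk. -/
noncomputable def duration {n k : ℕ} (c : Fin n → Fin n → ℝ) (W : CWalk n k) : ℝ :=
  W.tt c 0 k

/-- Revisit time of target `d`: the maximum time between consecutive visits to `d`. -/
noncomputable def RT {n k : ℕ} (c : Fin n → Fin n → ℝ) (W : CWalk n k) (d : Fin n) : ℝ :=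
  sSup {T : ℝ | ∃ i j : ℕ, i < j ∧ W.seq i = d ∧ W.seq j = d ∧
    (∀ t, i < t → t < j → W.seq t ≠ d) ∧ T = W.tt c i j}

/-- Revisit time of the walk: maximum revisit time over all targets. -/
noncomputable def R {n k : ℕ} (c : Fin n → Fin n → ℝ) (W : CWalk n k) : ℝ :=
  sSup {T : ℝ | ∃ d : Fin n, T = W.RT c d}

end CWalk

/-- Optimal revisit time over all closed walks with `k` visits. -/
noncomputable def Rstar (n : ℕ) (c : Fin n → Fin n → ℝ) (k : ℕ) : ℝ :=
  sInf {T : ℝ | ∃ W : CWalk n k, T = W.R c}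

/-- Optimal TSP tour length: minimal duration of a closed walk with `n` visits
(each target is then visited exactly once). -/
noncomputable def TSPstar (n : ℕ) (c : Fin n → Fin n → ℝ) : ℝ :=
  sInf {T : ℝ | ∃ W : CWalk n n, T = W.duration c}

/-!
In a walk with `k < (p + 1) n` visits some target is visited at most `p` times per period, so it
has a gap spanning at least `n + ⌈q/p⌉` steps. Replacing a gap by the gap of a target
missing from its window, repeatedly, yields such a gap whose window visits every target.
Shortcutting that window down to `n + ⌈q/p⌉` visits while keeping the first visit to each target
gives, by the triangle inequality, a closed walk whose duration, hence revisit time, is at most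
the duration of that gap.

Conversely, a walk with `P = n + ⌈q/p⌉ < 2n` visits has a target visited once per period, so its
revisit time is its duration `D`. Concatenating `p` shortcuts of one period, each with between `n`
and `P` visits and keeping the first visit to every target, gives a walk with `k` visits that
visits every target within every `P` consecutive steps of the original walk, so none of its gaps
lasts longer than `D`.
-/

open Finset Function

def IsGap {α : Type*} (w : ℕ → α) (d : α) (i j : ℕ) : Prop :=
  i < j ∧ w i = d ∧ w j = d ∧ ∀ t, i < t → t < j → w t ≠ d

def IsFirstVisit {α : Type*} (w : ℕ → α) (i t : ℕ) : Prop :=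
  ∀ s, i ≤ s → s < t → w s ≠ w t

lemma exists_isFirstVisit {α : Type*} {w : ℕ → α} {i j : ℕ} {e : α}
    (h : ∃ t, i ≤ t ∧ t < j ∧ w t = e) : ∃ t, i ≤ t ∧ t < j ∧ w t = e ∧ IsFirstVisit w i t := by
  classical
  obtain ⟨hi, hj, he⟩ := Nat.find_spec h
  exact ⟨Nat.find h, hi, hj, he, fun s hs hst hse =>
    Nat.find_min h hst ⟨hs, hst.trans hj, hse.trans he⟩⟩

lemma exists_last_visit {α : Type*} {w : ℕ → α} {e : α} {s : ℕ} (h : ∃ t ≤ s, w t = e) :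
    ∃ t ≤ s, w t = e ∧ ∀ t', t < t' → t' ≤ s → w t' ≠ e := by
  classical
  obtain ⟨t, hts, hte⟩ := h
  exact ⟨Nat.findGreatest (w · = e) s, Nat.findGreatest_le s,
    Nat.findGreatest_spec (P := (w · = e)) hts hte,
    fun _ h₁ h₂ => Nat.findGreatest_is_greatest h₁ h₂⟩

lemma exists_add_mul_mem_Ioc {a s P : ℕ} (hP : 0 < P) (ha : a < s + P) :
    ∃ q, s < a + q * P ∧ a + q * P ≤ s + P :=
  ⟨(s + P - a) / P, by have := Nat.lt_div_mul_add (a := s + P - a) hP; omega,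
    by have := Nat.div_mul_le_self (s + P - a) P; omega⟩

/-- The subsequence `w (u 0), …, w (u r)` of the segment `w i, …, w j`; only the values of `u` on
`0, …, r` matter. -/
structure Shortcut {α : Type*} (w : ℕ → α) (i j r : ℕ) where
  u : ℕ → ℕ
  zero : u 0 = i
  last : u r = j
  lt_succ : ∀ a < r, u a < u (a + 1)
  ne_succ : ∀ a < r, w (u a) ≠ w (u (a + 1))

namespace Shortcut

variable {α : Type*} {w : ℕ → α} {i j l r s : ℕ}

lemma strictMonoOn (C : Shortcut w i j r) : StrictMonoOn C.u (Set.Iic r) :=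
  strictMonoOn_Iic_of_lt_succ fun a ha => by simpa using C.lt_succ a ha

lemma u_lt_u (C : Shortcut w i j r) {a b : ℕ} (hab : a < b) (hb : b ≤ r) : C.u a < C.u b :=
  C.strictMonoOn (Set.mem_Iic.2 (hab.le.trans hb)) (Set.mem_Iic.2 hb) hab

lemma le_u (C : Shortcut w i j r) {a : ℕ} (ha : a ≤ r) : i ≤ C.u a := by
  have := C.strictMonoOn.monotoneOn (Set.mem_Iic.2 (Nat.zero_le r)) (Set.mem_Iic.2 ha)
    (Nat.zero_le a)
  rwa [C.zero] at this

def Visits (C : Shortcut w i j r) (t : ℕ) : Prop := ∃ a ≤ r, C.u a = t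

def KeepsFirstVisits (C : Shortcut w i j r) : Prop :=
  ∀ t, i ≤ t → t < j → IsFirstVisit w i t → C.Visits t

lemma Visits.exists_lt {C : Shortcut w i j r} {t : ℕ} (h : C.Visits t) (ht : t < j) :
    ∃ a < r, C.u a = t := by
  obtain ⟨a, ha, rfl⟩ := h
  exact ⟨a, ha.lt_of_ne (by rintro rfl; exact ht.ne C.last), rfl⟩

lemma KeepsFirstVisits.exists_apply_eq {C : Shortcut w i j r} (hC : C.KeepsFirstVisits) {e : α}
    (h : ∃ t, i ≤ t ∧ t < j ∧ w t = e) : ∃ a < r, w (C.u a) = e := by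
  obtain ⟨t, hit, htj, rfl, hfirst⟩ := exists_isFirstVisit h
  obtain ⟨a, ha, rfl⟩ := (hC t hit htj hfirst).exists_lt htj
  exact ⟨a, ha, rfl⟩

def nil (w : ℕ → α) (i : ℕ) : Shortcut w i i 0 where
  u _ := i
  zero := rfl
  last := rfl
  lt_succ _ h := absurd h (Nat.not_lt_zero _)
  ne_succ _ h := absurd h (Nat.not_lt_zero _)

def full (hw : ∀ t, w t ≠ w (t + 1)) (hij : i ≤ j) : Shortcut w i j (j - i) where
  u a := i + a
  zero := rfl
  last := by omega
  lt_succ _ _ := by omega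
  ne_succ a _ := hw (i + a)

lemma keepsFirstVisits_full (hw : ∀ t, w t ≠ w (t + 1)) (hij : i ≤ j) :
    (full hw hij).KeepsFirstVisits :=
  fun t hit htj _ => ⟨t - i, by omega, by simp only [full]; omega⟩

lemma rel_succ_concat {R : ℕ → ℕ → Prop} {f g : ℕ → ℕ} (hfg : f r = g 0)
    (hf : ∀ a < r, R (f a) (f (a + 1))) (hg : ∀ b < s, R (g b) (g (b + 1))) {a : ℕ}
    (ha : a < r + s) :
    R (if a ≤ r then f a else g (a - r)) (if a + 1 ≤ r then f (a + 1) else g (a + 1 - r)) := by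
  by_cases har : a < r
  · rw [if_pos har.le, if_pos (show a + 1 ≤ r by omega)]
    exact hf a har
  · rw [if_neg (show ¬a + 1 ≤ r by omega), show a + 1 - r = a - r + 1 by omega]
    split_ifs with h
    · obtain rfl : a = r := by omega
      rw [hfg, Nat.sub_self]
      exact hg 0 (by omega)
    · exact hg _ (by omega)

def append (C₁ : Shortcut w i j r) (C₂ : Shortcut w j l s) : Shortcut w i l (r + s) where
  u a := if a ≤ r then C₁.u a else C₂.u (a - r)
  zero := by simp [C₁.zero]
  last := by
    split_ifs with h
    · obtain rfl : s = 0 := by omega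
      rw [add_zero, C₁.last, ← C₂.zero, C₂.last]
    · rw [Nat.add_sub_cancel_left, C₂.last]
  lt_succ _ ha := rel_succ_concat (C₁.last.trans C₂.zero.symm) C₁.lt_succ C₂.lt_succ ha
  ne_succ _ ha := rel_succ_concat (R := fun x y => w x ≠ w y) (C₁.last.trans C₂.zero.symm)
    C₁.ne_succ C₂.ne_succ ha

lemma Visits.append_left {C₁ : Shortcut w i j r} (C₂ : Shortcut w j l s) {t : ℕ}
    (h : C₁.Visits t) : (C₁.append C₂).Visits t := by
  obtain ⟨a, ha, rfl⟩ := h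
  exact ⟨a, by omega, if_pos ha⟩

lemma Visits.append_right (C₁ : Shortcut w i j r) {C₂ : Shortcut w j l s} {t : ℕ}
    (h : C₂.Visits t) : (C₁.append C₂).Visits t := by
  obtain ⟨b, hb, rfl⟩ := h
  refine ⟨r + b, by omega, ?_⟩
  show (if r + b ≤ r then C₁.u (r + b) else C₂.u (r + b - r)) = C₂.u b
  split_ifs with h
  · obtain rfl : b = 0 := by omega
    rw [add_zero, C₁.last, C₂.zero]
  · rw [Nat.add_sub_cancel_left]

def shift {P : ℕ} (C : Shortcut w i j r) (hw : Periodic w P) : Shortcut w (i + P) (j + P) r where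
  u a := C.u a + P
  zero := by rw [C.zero]
  last := by rw [C.last]
  lt_succ a ha := Nat.add_lt_add_right (C.lt_succ a ha) P
  ne_succ a ha := by rw [hw, hw]; exact C.ne_succ a ha

lemma Visits.shift {P : ℕ} {C : Shortcut w i j r} (hw : Periodic w P) {t : ℕ} (h : C.Visits t) :
    (C.shift hw).Visits (t + P) :=
  let ⟨a, ha, hat⟩ := h
  ⟨a, ha, congrArg (· + P) hat⟩

def erase (C : Shortcut w i j (r + 1)) {b : ℕ} (hb : 0 < b) (hbr : b ≤ r)
    (hne : w (C.u (b - 1)) ≠ w (C.u (b + 1))) : Shortcut w i j r where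
  u a := if a < b then C.u a else C.u (a + 1)
  zero := by rw [if_pos hb, C.zero]
  last := by rw [if_neg (by omega), C.last]
  lt_succ a ha := by
    by_cases h : a + 1 < b
    · rw [if_pos (by omega), if_pos h]
      exact C.lt_succ a (by omega)
    · rw [if_neg h]
      split_ifs
      · exact C.u_lt_u (by omega) (by omega)
      · exact C.lt_succ (a + 1) (by omega)
  ne_succ a ha := by
    by_cases h : a + 1 < b
    · rw [if_pos (by omega), if_pos h]
      exact C.ne_succ a (by omega)
    · rw [if_neg h]
      split_ifs
      · rw [show a = b - 1 by omega, show b - 1 + 1 + 1 = b + 1 by omega]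
        exact hne
      · exact C.ne_succ (a + 1) (by omega)

lemma KeepsFirstVisits.erase {C : Shortcut w i j (r + 1)} (hC : C.KeepsFirstVisits) {b : ℕ}
    (hb : 0 < b) (hbr : b ≤ r) (hne : w (C.u (b - 1)) ≠ w (C.u (b + 1)))
    (hrep : ∃ a < b, w (C.u a) = w (C.u b)) : (C.erase hb hbr hne).KeepsFirstVisits := by
  intro t hit htj hfirst
  obtain ⟨a, ha, rfl⟩ := hC t hit htj hfirst
  obtain ⟨a', ha', hrep⟩ := hrep
  have hab : a ≠ b := by
    rintro rfl
    exact hfirst _ (C.le_u (by omega)) (C.u_lt_u ha' (by omega)) hrep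
  rcases hab.lt_or_gt with h | h
  · exact ⟨a, by omega, if_pos h⟩
  · refine ⟨a - 1, by omega, ?_⟩
    show (if a - 1 < b then _ else C.u (a - 1 + 1)) = C.u a
    rw [if_neg (by omega), Nat.sub_add_cancel (by omega)]

/-- A repeated value that is not squeezed between two equal values can be erased. Such a value
exists: if each one were squeezed, its right neighbour would be a repeat as well, up to the one
just before `j`, whose left neighbour would then equal `w j = d` inside the gap. -/
lemma exists_erasable (C : Shortcut w i j (r + 1)) (hr : 2 ≤ r) {d : α} (hgap : IsGap w d i j)
    {b : ℕ} (hb : 0 < b) (hbr : b ≤ r) (hrep : ∃ a < b, w (C.u a) = w (C.u b)) :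
    ∃ b, 0 < b ∧ b ≤ r ∧ (∃ a < b, w (C.u a) = w (C.u b)) ∧
      w (C.u (b - 1)) ≠ w (C.u (b + 1)) := by
  by_contra! hsqueezed
  have key : ∀ m b, b + m = r → 0 < b → (∃ a < b, w (C.u a) = w (C.u b)) → False := by
    intro m
    induction m with
    | zero =>
      intro b hbm hb hrep
      have h := hsqueezed b hb (by omega) hrep
      rw [show b + 1 = r + 1 by omega, C.last, hgap.2.2.1] at h
      have h₁ := C.u_lt_u (a := 0) (b := b - 1) (by omega) (by omega)
      have h₂ := C.u_lt_u (a := b - 1) (b := r + 1) (by omega) le_rfl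
      rw [C.zero] at h₁
      rw [C.last] at h₂
      exact hgap.2.2.2 _ h₁ h₂ h
    | succ m ih =>
      intro b hbm hb hrep
      exact ih (b + 1) (by omega) (by omega) ⟨b - 1, by omega, hsqueezed b hb (by omega) hrep⟩
  exact key (r - b) b (by omega) hb hrep

lemma KeepsFirstVisits.exists_shorter [Fintype α] {C : Shortcut w i j (r + 1)}
    (hC : C.KeepsFirstVisits) (hα : 2 ≤ Fintype.card α) (hr : Fintype.card α ≤ r) {d : α}
    (hgap : IsGap w d i j) : ∃ C' : Shortcut w i j r, C'.KeepsFirstVisits := by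
  obtain ⟨x, y, hxy, hwxy⟩ := Fintype.exists_ne_map_eq_of_card_lt
    (fun a : Fin (r + 1) => w (C.u a)) (by simpa using Nat.lt_succ_of_le hr)
  have hrep : ∃ b, 0 < b ∧ b ≤ r ∧ ∃ a < b, w (C.u a) = w (C.u b) := by
    rcases (Fin.val_ne_of_ne hxy).lt_or_gt with h | h
    · exact ⟨y, by omega, by omega, x, h, hwxy⟩
    · exact ⟨x, by omega, by omega, y, h, hwxy.symm⟩
  obtain ⟨b, hb, hbr, hrep⟩ := hrep
  obtain ⟨b, hb, hbr, hrep, hne⟩ := C.exists_erasable (by omega) hgap hb hbr hrep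
  exact ⟨C.erase hb hbr hne, hC.erase hb hbr hne hrep⟩

theorem exists_keepsFirstVisits [Fintype α] (hα : 2 ≤ Fintype.card α)
    (hw : ∀ t, w t ≠ w (t + 1)) {d : α} (hgap : IsGap w d i j) {ℓ : ℕ}
    (hℓ : Fintype.card α ≤ ℓ) (hℓj : ℓ ≤ j - i) :
    ∃ C : Shortcut w i j ℓ, C.KeepsFirstVisits := by
  refine Nat.decreasingInduction
    (motive := fun ℓ _ => Fintype.card α ≤ ℓ → ∃ C : Shortcut w i j ℓ, C.KeepsFirstVisits)
    (fun r _ ih hr => ?_) (fun _ => ⟨full hw hgap.1.le, keepsFirstVisits_full hw hgap.1.le⟩)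
    hℓj hℓ
  obtain ⟨C, hC⟩ := ih (by omega)
  exact hC.exists_shorter hα hr hgap

lemma apply_u_mod (C : Shortcut w i j r) (hclosed : w j = w i) {a : ℕ} (ha : a ≤ r) :
    w (C.u (a % r)) = w (C.u a) := by
  rcases ha.lt_or_eq with ha | rfl
  · rw [Nat.mod_eq_of_lt ha]
  · rw [Nat.mod_self, C.zero, C.last, hclosed]

/-- The positions in `w` of the periodic repetition of `C`, each round shifted by `M`. -/
def lift (C : Shortcut w i j r) (M t : ℕ) : ℕ := C.u (t % r) + t / r * M

lemma lift_add_mul (C : Shortcut w i j r) (hr : 0 < r) (M t q : ℕ) :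
    C.lift M (t + q * r) = C.lift M t + q * M := by
  simp only [lift, Nat.add_mul_mod_self_right, Nat.add_mul_div_right _ _ hr]
  ring

lemma le_lift (C : Shortcut w i j r) (hr : 0 < r) (M t : ℕ) : i ≤ C.lift M t :=
  (C.le_u (Nat.mod_lt t hr).le).trans (Nat.le_add_right _ _)

variable {M : ℕ}

lemma lift_of_le (C : Shortcut w i (i + M) r) (hr : 0 < r) {a : ℕ} (ha : a ≤ r) :
    C.lift M a = C.u a := by
  rcases ha.lt_or_eq with ha | rfl
  · simp [lift, Nat.mod_eq_of_lt ha, Nat.div_eq_of_lt ha]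
  · simp [lift, Nat.div_self hr, C.zero, C.last]

lemma lift_strictMono (C : Shortcut w i (i + M) r) (hr : 0 < r) : StrictMono (C.lift M) := by
  refine strictMono_nat_of_lt_succ fun t => ?_
  have ht := Nat.mod_lt t hr
  rw [← Nat.mod_add_div' t r, add_right_comm, C.lift_add_mul hr, C.lift_add_mul hr,
    C.lift_of_le hr ht.le, C.lift_of_le hr ht]
  exact Nat.add_lt_add_right (C.lt_succ _ ht) _

lemma Visits.exists_lift_eq {C : Shortcut w i (i + M) r} (hr : 0 < r) {t : ℕ} (h : C.Visits t)
    (ht : t < i + M) (q : ℕ) : ∃ s, C.lift M s = t + q * M := by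
  obtain ⟨a, ha, rfl⟩ := h.exists_lt ht
  exact ⟨a + q * r, by rw [C.lift_add_mul hr, C.lift_of_le hr ha.le]⟩

/-- What concatenating `p` shortcuts of `[i, i + P]` that keep the first visits after `i`, the
`q`-th one shifted by `q * P`, guarantees. -/
def KeepsLapFirstVisits (C : Shortcut w i j r) (P p : ℕ) : Prop :=
  ∀ q < p, ∀ t, i ≤ t → t < i + P → IsFirstVisit w i t → C.Visits (t + q * P)

theorem exists_keepsLapFirstVisits {n P : ℕ} (hw : Periodic w P)
    (hlap : ∀ ℓ, n ≤ ℓ → ℓ ≤ P → ∃ C : Shortcut w i (i + P) ℓ, C.KeepsFirstVisits) :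
    ∀ p k, p * n ≤ k → k ≤ p * P →
      ∃ C : Shortcut w i (i + p * P) k, C.KeepsLapFirstVisits P p := by
  intro p
  induction p with
  | zero =>
    intro k h₁ h₂
    obtain rfl : k = 0 := by omega
    rw [zero_mul, add_zero]
    exact ⟨nil w i, fun q hq => absurd hq (Nat.not_lt_zero q)⟩
  | succ p ih =>
    intro k h₁ h₂
    have hnP : n ≤ P := by
      by_contra! h
      exact absurd (h₁.trans h₂) (not_le.2 (Nat.mul_lt_mul_of_pos_left h p.succ_pos))
    have := Nat.mul_le_mul_left p hnP
    rw [add_one_mul] at h₁ h₂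
    set ℓ := max n (k - p * P)
    obtain ⟨C, hC⟩ := ih (k - ℓ) (by omega) (by omega)
    obtain ⟨L, hL⟩ := hlap ℓ (le_max_left _ _) (by omega)
    have hwp : Periodic w (p * P) := by simpa using hw.nat_mul p
    rw [show i + (p + 1) * P = i + P + p * P by ring, show k = k - ℓ + ℓ by omega]
    refine ⟨C.append (L.shift hwp), fun q hq t ht₁ ht₂ hfirst => ?_⟩
    rcases (Nat.lt_succ_iff.1 hq).lt_or_eq with hq | rfl
    · exact (hC q hq t ht₁ ht₂ hfirst).append_left _
    · exact Visits.append_right C ((hL t ht₁ ht₂ hfirst).shift hwp)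

lemma KeepsLapFirstVisits.exists_lift_eq {P p : ℕ} {C : Shortcut w i (i + p * P) r}
    (hC : C.KeepsLapFirstVisits P p) (hp : 0 < p) (hr : 0 < r) {t : ℕ} (ht₁ : i ≤ t)
    (ht₂ : t < i + P) (hfirst : IsFirstVisit w i t) (q : ℕ) :
    ∃ s, C.lift (p * P) s = t + q * P := by
  have hqp := Nat.mod_lt q hp
  have : q % p * P + P ≤ p * P := by rw [← add_one_mul]; exact Nat.mul_le_mul_right P hqp
  obtain ⟨s, hs⟩ := (hC (q % p) hqp t ht₁ ht₂ hfirst).exists_lift_eq hr (by omega) (q / p)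
  refine ⟨s, hs.trans ?_⟩
  conv_rhs => rw [← Nat.mod_add_div q p]
  ring

end Shortcut

namespace Shortcut

variable {n i j r M : ℕ} {w : ℕ → Fin n}

def toCWalk (C : Shortcut w i j r) (hr : 0 < r) (hclosed : w j = w i)
    (hcov : ∀ e, ∃ a < r, w (C.u a) = e) : CWalk n r where
  seq t := w (C.u (t % r))
  periodic t := by rw [Nat.add_mod_right]
  step t := by
    show w (C.u (t % r)) ≠ w (C.u ((t + 1) % r))
    rw [← Nat.mod_add_mod, C.apply_u_mod hclosed (Nat.mod_lt t hr)]
    exact C.ne_succ _ (Nat.mod_lt t hr)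
  covers e :=
    let ⟨a, ha, he⟩ := hcov e
    ⟨a, ha, by rw [Nat.mod_eq_of_lt ha, he]⟩

lemma toCWalk_seq_eq_lift (C : Shortcut w i (i + M) r) (hr : 0 < r)
    (hw : Periodic w M) (hcov : ∀ e, ∃ a < r, w (C.u a) = e) (t : ℕ) :
    (C.toCWalk hr (hw i) hcov).seq t = w (C.lift M t) := by
  show w (C.u (t % r)) = w (C.u (t % r) + t / r * M)
  simpa using (hw.nat_mul (t / r) (C.u (t % r))).symm

end Shortcut

namespace CWalk

section

variable {n k : ℕ} {c : Fin n → Fin n → ℝ} (W : CWalk n k)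

lemma seq_periodic : Periodic W.seq k := W.periodic

lemma tt_nonneg (hc : ∀ u v : Fin n, u ≠ v → 0 < c u v) (i j : ℕ) : 0 ≤ W.tt c i j :=
  sum_nonneg fun t _ => (hc _ _ (W.step t)).le

lemma tt_add_tt {i j l : ℕ} (hij : i ≤ j) (hjl : j ≤ l) :
    W.tt c i j + W.tt c j l = W.tt c i l :=
  sum_Ico_consecutive _ hij hjl

lemma tt_le_tt (hc : ∀ u v : Fin n, u ≠ v → 0 < c u v) {i j l : ℕ} (hij : i ≤ j) (hjl : j ≤ l) :
    W.tt c i j ≤ W.tt c i l := by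
  rw [← W.tt_add_tt hij hjl]
  exact le_add_of_nonneg_right (W.tt_nonneg hc j l)

lemma tt_add_period (i : ℕ) : W.tt c i (i + k) = W.duration c := by
  have hf : Periodic (fun t => c (W.seq t) (W.seq (t + 1))) k := fun t => by
    simp only [add_right_comm t k 1, W.periodic]
  rw [duration, tt, tt, Nat.Ico_zero_eq_range, ← Nat.image_Ico_mod i k,
    sum_image (Nat.mod_injOn_Ico i k)]
  exact sum_congr rfl fun t _ => (hf.map_mod_nat t).symm

lemma dist_le_tt (htri : ∀ u v w : Fin n, c u w ≤ c u v + c v w) {i j : ℕ} (hij : i < j) :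
    c (W.seq i) (W.seq j) ≤ W.tt c i j := by
  induction j, hij using Nat.le_induction with
  | base => simp [tt]
  | succ j hij ih =>
    rw [← W.tt_add_tt (by omega : i ≤ j) j.le_succ]
    have hstep : W.tt c j (j + 1) = c (W.seq j) (W.seq (j + 1)) := by simp [tt]
    linarith [htri (W.seq i) (W.seq j) (W.seq (j + 1))]

lemma sum_le_tt (htri : ∀ u v w : Fin n, c u w ≤ c u v + c v w) {U : ℕ → ℕ} {x y : ℕ}
    (hxy : x ≤ y) (hU : StrictMonoOn U (Set.Icc x y)) :
    ∑ t ∈ Ico x y, c (W.seq (U t)) (W.seq (U (t + 1))) ≤ W.tt c (U x) (U y) := by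
  induction y, hxy using Nat.le_induction with
  | base => simp [tt]
  | succ y hxy ih =>
    have hlt : U y < U (y + 1) := hU ⟨hxy, by omega⟩ ⟨by omega, le_rfl⟩ (by omega)
    have hle : U x ≤ U y := hU.monotoneOn ⟨le_rfl, by omega⟩ ⟨hxy, by omega⟩ hxy
    rw [sum_Ico_succ_top hxy, ← W.tt_add_tt hle hlt.le]
    exact add_le_add (ih (hU.mono (Set.Icc_subset_Icc_right (by omega)))) (W.dist_le_tt htri hlt)

lemma tt_le_tt_of_seq_eq (htri : ∀ u v w : Fin n, c u w ≤ c u v + c v w) {k' : ℕ}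
    (V : CWalk n k') {U : ℕ → ℕ} (hU : StrictMono U) (hVW : ∀ t, V.seq t = W.seq (U t))
    {x y : ℕ} (hxy : x ≤ y) : V.tt c x y ≤ W.tt c (U x) (U y) := by
  calc V.tt c x y = ∑ t ∈ Ico x y, c (W.seq (U t)) (W.seq (U (t + 1))) := by simp only [tt, hVW]
    _ ≤ W.tt c (U x) (U y) := W.sum_le_tt htri hxy (hU.strictMonoOn _)

lemma exists_visit_Ico (d : Fin n) (s : ℕ) : ∃ t ∈ Ico s (s + k), W.seq t = d := by
  obtain ⟨i, hi, rfl⟩ := W.covers d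
  have : i ∈ (Ico s (s + k)).image (· % k) := by
    rw [Nat.image_Ico_mod]
    exact mem_range.2 hi
  obtain ⟨t, ht, hti⟩ := mem_image.1 this
  exact ⟨t, ht, by rw [← hti, W.seq_periodic.map_mod_nat]⟩

lemma exists_isGap_start {d : Fin n} {a : ℕ} (ha : W.seq a = d) : ∃ b, IsGap W.seq d a b := by
  obtain ⟨b, hb, hbd⟩ := W.exists_visit_Ico d (a + 1)
  rw [mem_Ico] at hb
  obtain ⟨b, hab, -, hbd, hfirst⟩ := exists_isFirstVisit ⟨b, hb.1, hb.2, hbd⟩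
  exact ⟨b, hab, ha, hbd, fun t h₁ h₂ => hbd ▸ hfirst t h₁ h₂⟩

lemma le_add_period_of_isGap {d : Fin n} {i j : ℕ} (h : IsGap W.seq d i j) : j ≤ i + k := by
  by_contra! hj
  obtain ⟨t, ht, htd⟩ := W.exists_visit_Ico d (i + 1)
  rw [mem_Ico] at ht
  exact h.2.2.2 t (by omega) (by omega) htd

lemma tt_le_duration_of_isGap (hc : ∀ u v : Fin n, u ≠ v → 0 < c u v) {d : Fin n} {i j : ℕ}
    (h : IsGap W.seq d i j) : W.tt c i j ≤ W.duration c :=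
  W.tt_add_period i ▸ W.tt_le_tt hc h.1.le (W.le_add_period_of_isGap h)

lemma tt_le_RT_of_isGap (hc : ∀ u v : Fin n, u ≠ v → 0 < c u v) {d : Fin n} {i j : ℕ}
    (h : IsGap W.seq d i j) : W.tt c i j ≤ W.RT c d :=
  le_csSup ⟨W.duration c, by
    rintro _ ⟨i, j, h₁, h₂, h₃, h₄, rfl⟩
    exact W.tt_le_duration_of_isGap hc ⟨h₁, h₂, h₃, h₄⟩⟩
    ⟨i, j, h.1, h.2.1, h.2.2.1, h.2.2.2, rfl⟩

lemma RT_le_R (d : Fin n) : W.RT c d ≤ W.R c :=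
  le_csSup ((Set.finite_range fun d => W.RT c d).bddAbove.mono
    (by rintro _ ⟨d, rfl⟩; exact ⟨d, rfl⟩)) ⟨d, rfl⟩

lemma R_le_of_forall_isGap {B : ℝ} (hB : 0 ≤ B)
    (h : ∀ d i j, IsGap W.seq d i j → W.tt c i j ≤ B) : W.R c ≤ B := by
  refine Real.sSup_le ?_ hB
  rintro _ ⟨d, rfl⟩
  refine Real.sSup_le ?_ hB
  rintro _ ⟨i, j, h₁, h₂, h₃, h₄, rfl⟩
  exact h d i j ⟨h₁, h₂, h₃, h₄⟩

lemma R_le_duration (hc : ∀ u v : Fin n, u ≠ v → 0 < c u v) : W.R c ≤ W.duration c :=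
  W.R_le_of_forall_isGap (W.tt_nonneg hc 0 k) fun _ _ _ h => W.tt_le_duration_of_isGap hc h

lemma R_nonneg (hc : ∀ u v : Fin n, u ≠ v → 0 < c u v) : 0 ≤ W.R c := by
  refine Real.sSup_nonneg ?_
  rintro _ ⟨d, rfl⟩
  refine Real.sSup_nonneg ?_
  rintro _ ⟨i, j, -, -, -, -, rfl⟩
  exact W.tt_nonneg hc i j

lemma exists_visited_at_most (p : ℕ) (hk : k < n * (p + 1)) :
    ∃ d, ∀ s, #{t ∈ Ico s (s + k) | W.seq t = d} ≤ p := by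
  obtain ⟨d, -, hd⟩ := exists_card_fiber_lt_of_card_lt_mul (s := range k) (t := univ)
    (f := W.seq) (n := p + 1) (by simpa using hk)
  refine ⟨d, fun s => ?_⟩
  rw [Nat.filter_Ico_card_eq_of_periodic s k _ fun t => by simp only [W.periodic],
    Nat.count_eq_card_filter_range]
  omega

lemma exists_long_isGap {d : Fin n} {p L : ℕ}
    (hd : ∀ s, #{t ∈ Ico s (s + k) | W.seq t = d} ≤ p) (hL : 0 < L) (hlen : p * (L - 1) < k) :
    ∃ I J, IsGap W.seq d I J ∧ L ≤ J - I := by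
  -- otherwise visits to `d` recur every `L - 1` steps, giving `p + 1` of them within one period
  by_contra! hshort
  have hnext : ∀ t, W.seq t = d → ∃ t', t < t' ∧ t' ≤ t + (L - 1) ∧ W.seq t' = d := by
    intro t ht
    obtain ⟨J, hJ⟩ := W.exists_isGap_start ht
    exact ⟨J, hJ.1, by have := hshort t J hJ; omega, hJ.2.2.1⟩
  obtain ⟨o, -, ho⟩ := W.covers d
  have hcount : ∀ a, ∃ t, o ≤ t ∧ t ≤ o + a * (L - 1) ∧ W.seq t = d ∧
      a + 1 ≤ #{x ∈ Ico o (t + 1) | W.seq x = d} := by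
    intro a
    induction a with
    | zero => exact ⟨o, le_rfl, by simp, ho, card_pos.2 ⟨o, by simp [ho]⟩⟩
    | succ a ih =>
      obtain ⟨t, hot, hta, htd, hcard⟩ := ih
      obtain ⟨t', htt', ht'L, ht'd⟩ := hnext t htd
      refine ⟨t', by omega, by rw [add_one_mul]; omega, ht'd, ?_⟩
      have hsub : insert t' {x ∈ Ico o (t + 1) | W.seq x = d} ⊆
          {x ∈ Ico o (t' + 1) | W.seq x = d} := by
        intro x
        simp only [mem_insert, mem_filter, mem_Ico]
        rintro (rfl | ⟨⟨h₁, h₂⟩, h₃⟩)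
        · exact ⟨⟨by omega, by omega⟩, ht'd⟩
        · exact ⟨⟨h₁, by omega⟩, h₃⟩
      have := card_le_card hsub
      rw [card_insert_of_notMem fun hx => by rw [mem_filter, mem_Ico] at hx; omega] at this
      omega
  obtain ⟨t, -, ht, -, hcard⟩ := hcount p
  have := card_le_card (filter_subset_filter (W.seq · = d)
    (Ico_subset_Ico_right (a := o) (show t + 1 ≤ o + k by omega)))
  have := hd o
  omega

def visited (I J : ℕ) : Finset (Fin n) := (Ico I J).image W.seq

/-- If `e` is missing from the window of a gap, the gap of `e` around a later copy of that window
is strictly longer and visits `e` as well. -/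
lemma exists_isGap_wider {d e : Fin n} {I J : ℕ} (h : IsGap W.seq d I J)
    (he : e ∉ W.visited I J) :
    ∃ I' J', IsGap W.seq e I' J' ∧ J - I < J' - I' ∧
      insert e (W.visited I J) ⊆ W.visited I' J' := by
  have he' : ∀ t, I ≤ t → t < J → W.seq t ≠ e := fun t h₁ h₂ hte =>
    he (mem_image.2 ⟨t, mem_Ico.2 ⟨h₁, h₂⟩, hte⟩)
  have hde : d ≠ e := h.2.1 ▸ he' I le_rfl h.1
  obtain ⟨t₀, ht₀, ht₀e⟩ := W.exists_visit_Ico e I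
  rw [mem_Ico] at ht₀
  obtain ⟨I', hI'k, hI'e, hI'max⟩ := exists_last_visit ⟨t₀, ht₀.2.le, ht₀e⟩
  have hI'lo : I ≤ I' := by
    by_contra! hI'
    exact hI'max t₀ (by omega) ht₀.2.le ht₀e
  have hI'hi : I' < I + k := hI'k.lt_of_ne fun hI' =>
    hde (by rw [← h.2.1, ← W.periodic I, ← hI', hI'e])
  obtain ⟨J', hgap⟩ := W.exists_isGap_start hI'e
  have hfree : ∀ t, I' < t → t ≤ J + k → W.seq t ≠ e := by
    intro t h₁ h₂
    rcases le_or_gt t (I + k) with h₃ | h₃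
    · exact hI'max t h₁ h₃
    rcases h₂.lt_or_eq with h₄ | rfl
    · rw [show t = t - k + k by omega, W.periodic]
      exact he' _ (by omega) (by omega)
    · rw [W.periodic, h.2.2.1]
      exact hde
  have hJ' : J + k < J' := by
    by_contra! hJ'
    exact hfree J' hgap.1 hJ' hgap.2.2.1
  refine ⟨I', J', hgap, by have := h.1; omega, ?_⟩
  intro x hx
  simp only [visited, mem_insert, mem_image, mem_Ico] at hx ⊢
  rcases hx with rfl | ⟨t, ⟨h₁, h₂⟩, rfl⟩
  · exact ⟨I', ⟨le_rfl, hgap.1⟩, hI'e⟩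
  · exact ⟨t + k, ⟨by omega, by omega⟩, W.periodic t⟩

lemma exists_covering_isGap {d : Fin n} {I J : ℕ} (h : IsGap W.seq d I J) :
    ∃ d' I' J', IsGap W.seq d' I' J' ∧ J - I ≤ J' - I' ∧
      ∀ e, ∃ t, I' ≤ t ∧ t < J' ∧ W.seq t = e := by
  generalize hm : n - #(W.visited I J) = m
  induction m using Nat.strong_induction_on generalizing d I J with
  | _ m ih =>
    by_cases hcov : ∀ e, e ∈ W.visited I J
    · refine ⟨d, I, J, h, le_rfl, fun e => ?_⟩
      obtain ⟨t, ht, hte⟩ := mem_image.1 (hcov e)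
      exact ⟨t, (mem_Ico.1 ht).1, (mem_Ico.1 ht).2, hte⟩
    obtain ⟨e, he⟩ := not_forall.1 hcov
    obtain ⟨I', J', h', hlen, hsub⟩ := W.exists_isGap_wider h he
    have hcard := card_le_card hsub
    rw [card_insert_of_notMem he] at hcard
    have hle := card_le_univ (W.visited I' J')
    rw [Fintype.card_fin] at hle
    obtain ⟨d'', I'', J'', h'', hlen', hcov⟩ := ih _ (by omega) h' rfl
    exact ⟨d'', I'', J'', h'', by omega, hcov⟩

lemma isGap_add_period_of_card_le_one {d : Fin n}
    (hd : ∀ s, #{t ∈ Ico s (s + k) | W.seq t = d} ≤ 1) {i : ℕ} (hi : W.seq i = d) :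
    IsGap W.seq d i (i + k) := by
  obtain ⟨i₁, hi₁, -⟩ := W.covers d
  refine ⟨by omega, hi, by rw [W.periodic, hi], fun t h₁ h₂ htd => ?_⟩
  have : 1 < #{x ∈ Ico i (i + k) | W.seq x = d} :=
    one_lt_card.2 ⟨i, by simp [hi]; omega, t, by simp [htd]; omega, by omega⟩
  exact absurd (hd i) (by omega)

lemma tt_le_duration_of_isGap_of_visit (hc : ∀ u v : Fin n, u ≠ v → 0 < c u v)
    (htri : ∀ u v w : Fin n, c u w ≤ c u v + c v w) {k' : ℕ} (V : CWalk n k') {U : ℕ → ℕ}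
    (hU : StrictMono U) (hVW : ∀ t, V.seq t = W.seq (U t)) {e : Fin n} {x y : ℕ}
    (h : IsGap V.seq e x y) (hvisit : ∃ t, U x < U t ∧ U t ≤ U x + k ∧ V.seq t = e) :
    V.tt c x y ≤ W.duration c := by
  obtain ⟨t, hxt, htx, hte⟩ := hvisit
  have hyt : y ≤ t := by
    by_contra! hty
    exact h.2.2.2 t (hU.lt_iff_lt.1 hxt) hty hte
  calc V.tt c x y ≤ W.tt c (U x) (U y) := W.tt_le_tt_of_seq_eq htri V hU hVW h.1.le
    _ ≤ W.tt c (U x) (U x + k) :=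
      W.tt_le_tt hc (hU.monotone h.1.le) ((hU.monotone hyt).trans htx)
    _ = W.duration c := W.tt_add_period _

lemma duration_toCWalk_le (htri : ∀ u v w : Fin n, c u w ≤ c u v + c v w) {i j r : ℕ}
    (C : Shortcut W.seq i j r) (hr : 0 < r) (hclosed : W.seq j = W.seq i)
    (hcov : ∀ e, ∃ a < r, W.seq (C.u a) = e) :
    (C.toCWalk hr hclosed hcov).duration c ≤ W.tt c i j := by
  calc (C.toCWalk hr hclosed hcov).duration c
      = ∑ t ∈ Ico 0 r, c (W.seq (C.u t)) (W.seq (C.u (t + 1))) := by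
        simp only [duration, tt]
        refine sum_congr rfl fun t ht => ?_
        rw [mem_Ico] at ht
        show c (W.seq (C.u (t % r))) (W.seq (C.u ((t + 1) % r))) = _
        rw [C.apply_u_mod hclosed ht.2.le, C.apply_u_mod hclosed ht.2]
    _ ≤ W.tt c (C.u 0) (C.u r) :=
        W.sum_le_tt htri (Nat.zero_le r) (C.strictMonoOn.mono fun a ha => ha.2)
    _ = W.tt c i j := by rw [C.zero, C.last]

theorem exists_R_le_of_lt_mul (hn : 2 ≤ n)
    (hc : ∀ u v : Fin n, u ≠ v → 0 < c u v) (htri : ∀ u v w : Fin n, c u w ≤ c u v + c v w)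
    {p L : ℕ} (hk : k < n * (p + 1)) (hL : n ≤ L) (hlen : p * (L - 1) < k) :
    ∃ V : CWalk n L, V.R c ≤ W.R c := by
  obtain ⟨d, hd⟩ := W.exists_visited_at_most p hk
  obtain ⟨I, J, hIJ, hlong⟩ := W.exists_long_isGap hd (by omega) hlen
  obtain ⟨d', I', J', hgap, hlong', hcov⟩ := W.exists_covering_isGap hIJ
  obtain ⟨C, hC⟩ := Shortcut.exists_keepsFirstVisits (by simpa using hn) W.step hgap
    (ℓ := L) (by simpa using hL) (by omega)
  have hclosed : W.seq J' = W.seq I' := hgap.2.2.1.trans hgap.2.1.symm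
  have hcovC : ∀ e, ∃ a < L, W.seq (C.u a) = e := fun e => hC.exists_apply_eq (hcov e)
  refine ⟨C.toCWalk (by omega) hclosed hcovC, ?_⟩
  calc _ ≤ (C.toCWalk (by omega) hclosed hcovC).duration c := R_le_duration _ hc
    _ ≤ W.tt c I' J' := W.duration_toCWalk_le htri C _ hclosed hcovC
    _ ≤ W.RT c d' := W.tt_le_RT_of_isGap hc hgap
    _ ≤ W.R c := W.RT_le_R d'

end

section

variable {n P : ℕ} {c : Fin n → Fin n → ℝ} (W : CWalk n P)

lemma exists_R_le_duration_of_laps (hc : ∀ u v : Fin n, u ≠ v → 0 < c u v)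
    (htri : ∀ u v w : Fin n, c u w ≤ c u v + c v w)
    {p k i₀ : ℕ} (hp : 0 < p) (hk : 0 < k) (C : Shortcut W.seq i₀ (i₀ + p * P) k)
    (hC : C.KeepsLapFirstVisits P p) : ∃ V : CWalk n k, V.R c ≤ W.duration c := by
  have hP : 0 < P := by
    have := C.u_lt_u hk le_rfl
    rw [C.zero, C.last] at this
    exact Nat.pos_of_ne_zero fun h => by simp [h] at this
  have hw : Periodic W.seq (p * P) := by simpa using W.seq_periodic.nat_mul p
  choose π hπ using fun e => exists_isFirstVisit (by
    obtain ⟨t, ht, hte⟩ := W.exists_visit_Ico e i₀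
    exact ⟨t, (mem_Ico.1 ht).1, (mem_Ico.1 ht).2, hte⟩)
  have hcov : ∀ e, ∃ a < k, W.seq (C.u a) = e := fun e => by
    obtain ⟨h₁, h₂, h₃, h₄⟩ := hπ e
    have := Nat.le_mul_of_pos_left P hp
    obtain ⟨a, ha, hu⟩ := (hC 0 hp (π e) h₁ h₂ h₄).exists_lt (by omega)
    exact ⟨a, ha, by rw [hu, zero_mul, add_zero, h₃]⟩
  refine ⟨C.toCWalk hk (hw i₀) hcov, R_le_of_forall_isGap _ (W.tt_nonneg hc 0 P) ?_⟩
  intro e x y hxy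
  obtain ⟨h₁, h₂, h₃, h₄⟩ := hπ e
  -- the kept copy `π e + q * P` of the first visit to `e` lies within `P` steps after `x`
  obtain ⟨q, hq₁, hq₂⟩ :=
    exists_add_mul_mem_Ioc hP (h₂.trans_le (Nat.add_le_add_right (C.le_lift hk _ x) P))
  obtain ⟨s, hs⟩ := hC.exists_lift_eq hp hk h₁ h₂ h₄ q
  refine W.tt_le_duration_of_isGap_of_visit hc htri _ (C.lift_strictMono hk)
    (C.toCWalk_seq_eq_lift hk hw hcov) hxy ⟨s, hs ▸ hq₁, hs ▸ hq₂, ?_⟩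
  rw [C.toCWalk_seq_eq_lift hk hw hcov, hs]
  simpa [h₃] using W.seq_periodic.nat_mul q (π e)

theorem exists_R_le_of_mul_le (hn : 2 ≤ n)
    (hc : ∀ u v : Fin n, u ≠ v → 0 < c u v) (htri : ∀ u v w : Fin n, c u w ≤ c u v + c v w)
    (hP : P < 2 * n) {p k : ℕ} (hp : 0 < p) (hk₁ : p * n ≤ k) (hk₂ : k ≤ p * P) :
    ∃ V : CWalk n k, V.R c ≤ W.R c := by
  obtain ⟨d, hd⟩ := W.exists_visited_at_most 1 (by omega)
  obtain ⟨i₀, -, hi₀⟩ := W.covers d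
  have hgap := W.isGap_add_period_of_card_le_one hd hi₀
  obtain ⟨C, hC⟩ := Shortcut.exists_keepsLapFirstVisits W.seq_periodic (fun ℓ h₁ h₂ =>
    Shortcut.exists_keepsFirstVisits (by simpa using hn) W.step hgap (by simpa using h₁)
      (by omega)) p k hk₁ hk₂
  obtain ⟨V, hV⟩ := W.exists_R_le_duration_of_laps hc htri hp
    (by have := Nat.le_mul_of_pos_left n hp; omega) C hC
  refine ⟨V, hV.trans ?_⟩
  rw [← W.tt_add_period i₀]
  exact (W.tt_le_RT_of_isGap hc hgap).trans (W.RT_le_R d)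

end

end CWalk

section Rstar

variable {n : ℕ} {c : Fin n → Fin n → ℝ}

lemma Rstar_le_R (hc : ∀ u v : Fin n, u ≠ v → 0 < c u v) {k : ℕ} (V : CWalk n k) :
    Rstar n c k ≤ V.R c :=
  csInf_le ⟨0, by rintro _ ⟨V, rfl⟩; exact V.R_nonneg hc⟩ ⟨V, rfl⟩

lemma Rstar_le_Rstar (hc : ∀ u v : Fin n, u ≠ v → 0 < c u v) {k k' : ℕ} [Nonempty (CWalk n k')]
    (h : ∀ W : CWalk n k', ∃ V : CWalk n k, V.R c ≤ W.R c) : Rstar n c k ≤ Rstar n c k' := by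
  obtain ⟨W₀⟩ := ‹Nonempty (CWalk n k')›
  refine le_csInf ⟨W₀.R c, W₀, rfl⟩ ?_
  rintro _ ⟨W, rfl⟩
  obtain ⟨V, hV⟩ := h W
  exact (Rstar_le_R hc V).trans hV

lemma Rstar_eq_Rstar (hc : ∀ u v : Fin n, u ≠ v → 0 < c u v) {k k' : ℕ}
    (h₁ : ∀ W : CWalk n k, ∃ V : CWalk n k', V.R c ≤ W.R c)
    (h₂ : ∀ W : CWalk n k', ∃ V : CWalk n k, V.R c ≤ W.R c) : Rstar n c k = Rstar n c k' := by
  rcases isEmpty_or_nonempty (CWalk n k) with hk | hk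
  · have : IsEmpty (CWalk n k') := ⟨fun W => (h₂ W).elim fun V _ => hk.elim V⟩
    simp [Rstar]
  · obtain ⟨V, -⟩ := h₁ hk.some
    have : Nonempty (CWalk n k') := ⟨V⟩
    exact le_antisymm (Rstar_le_Rstar hc h₂) (Rstar_le_Rstar hc h₁)

end Rstar

theorem Rstar_determined_by_first_n_values_general
    (n p q k : ℕ) (hn : 2 ≤ n) (hp : 1 ≤ p) (hq : q ≤ n - 1)
    (hk : k = p * n + q)
    (c : Fin n → Fin n → ℝ)
    (hc : ∀ u v : Fin n, u ≠ v → 0 < c u v)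
    (htri : ∀ u v w : Fin n, c u w ≤ c u v + c v w) :
    Rstar n c k = Rstar n c (n + (q + p - 1) / p) := by
  have hceil := Nat.lt_div_mul_add (a := q + p - 1) hp
  have hfloor := Nat.div_mul_le_self (q + p - 1) p
  set m := (q + p - 1) / p
  clear_value m
  have hm₁ : q ≤ p * m := by rw [mul_comm]; omega
  have hm₂ : p * m + 1 ≤ q + p := by rw [mul_comm]; omega
  have hmq : m ≤ q := by nlinarith
  have hpn : n ≤ p * n := Nat.le_mul_of_pos_left n hp
  apply Rstar_eq_Rstar hc
  · intro W
    exact W.exists_R_le_of_lt_mul hn hc htri (by rw [hk, mul_add_one, mul_comm n p]; omega)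
      (by omega) (by rw [Nat.mul_sub_one, mul_add]; omega)
  · intro W
    exact W.exists_R_le_of_mul_le hn hc htri (by omega) hp (by omega) (by rw [mul_add]; omega)

/-- for every `k ≥ n`, writing `k = p n + q` with `p ≥ 1` and
`0 ≤ q ≤ n - 1`, we have `R*(k) = R*(n + ⌈q/p⌉)` (natural-division ceiling). -/
theorem Rstar_determined_by_first_n_values
    (n p q k : ℕ) (hn : 2 ≤ n) (hk0 : n ≤ k) (hp : 1 ≤ p) (hq : q ≤ n - 1)
    (hk : k = p * n + q)
    (c : Fin n → Fin n → ℝ)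
    (hc : ∀ u v : Fin n, u ≠ v → 0 < c u v)
    (htri : ∀ u v w : Fin n, c u w ≤ c u v + c v w) :
    Rstar n c k = Rstar n c (n + (q + p - 1) / p) :=
  Rstar_determined_by_first_n_values_general n p q k hn hp hq hk c hc htri
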